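/- arXiv:2302.09873 — 4 statements merged into one kernel-verified Lean document; each statement's English description precedes it below -/
import Mathlib

section
/- Let φ : [0,∞) → [0,∞) be an increasing continuous function with φ(0) = 0, and let b > 0 be such that K_b := sup{σ^b exp(−φ(σ)/2) : σ ≥ 0} < ∞. Let {a_k} and {λ_k} be sequences of nonnegative reals with 0 < E := ∑ a_k < ∞ and F := ∑ a_k max{1, λ_k} exp(φ(λ_k)) < ∞. Then ∑ a_k λ_k^b ≤ (K_b + [φ^{-1}(2 log(F/E))]^b) · E, where φ^{-1} denotes the inverse function of φ. -/
open Real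

theorem stmt1 (φ φinv : ℝ → ℝ) (b Kb : ℝ) (a lam : ℕ → ℝ)
    (hφ0 : φ 0 = 0)
    (hφnonneg : ∀ σ ≥ (0:ℝ), 0 ≤ φ σ)
    (hφmono : StrictMonoOn φ (Set.Ici 0))
    (hφcont : ContinuousOn φ (Set.Ici 0))
    (hφinv_left : ∀ σ ≥ (0:ℝ), φinv (φ σ) = σ)
    (hφinv_right : ∀ y ≥ (0:ℝ), φ (φinv y) = y ∧ 0 ≤ φinv y)
    (hb : 0 < b)
    (hKb : ∀ σ ≥ (0:ℝ), σ ^ b * Real.exp (-(φ σ) / 2) ≤ Kb)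
    (ha : ∀ k, 0 ≤ a k) (hlam : ∀ k, 0 ≤ lam k)
    (hsumE : Summable a) (hEpos : 0 < ∑' k, a k)
    (hsumF : Summable (fun k => a k * max 1 (lam k) * Real.exp (φ (lam k)))) :
    ∑' k, a k * lam k ^ b ≤
      (Kb + (φinv (2 * Real.log ((∑' k, a k * max 1 (lam k) * Real.exp (φ (lam k))) / (∑' k, a k)))) ^ b)
        * (∑' k, a k) := by
  set E := ∑' k, a k with hE
  set F := ∑' k, a k * max 1 (lam k) * Real.exp (φ (lam k)) with hF
  have hak_le : ∀ k, a k ≤ a k * max 1 (lam k) * Real.exp (φ (lam k)) := by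
    intro k
    have h1 : (1:ℝ) ≤ max 1 (lam k) := le_max_left _ _
    have h2 : (1:ℝ) ≤ Real.exp (φ (lam k)) := Real.one_le_exp (hφnonneg _ (hlam k))
    have hak := ha k
    calc a k = a k * 1 * 1 := by ring
      _ ≤ a k * max 1 (lam k) * Real.exp (φ (lam k)) := by
          apply mul_le_mul (mul_le_mul_of_nonneg_left h1 hak) h2 zero_le_one
          exact mul_nonneg hak (le_trans zero_le_one h1)
  have hEF : E ≤ F := Summable.tsum_le_tsum hak_le hsumE hsumF
  have hFpos : 0 < F := lt_of_lt_of_le hEpos hEF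
  have hlogpos : 0 ≤ Real.log (F / E) :=
    Real.log_nonneg ((one_le_div hEpos).2 hEF)
  have hlog : 0 ≤ 2 * Real.log (F / E) := by linarith
  obtain ⟨hφT, hT0⟩ := hφinv_right _ hlog
  set T := φinv (2 * Real.log (F / E)) with hT
  have hKb0 : 0 ≤ Kb := by
    have h := hKb 0 le_rfl
    rw [Real.zero_rpow hb.ne'] at h
    simpa using h
  have hEFpos : 0 < E / F := div_pos hEpos hFpos
  have key : ∀ k, a k * lam k ^ b ≤
      T ^ b * a k + Kb * (E / F) * (a k * max 1 (lam k) * Real.exp (φ (lam k))) := by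
    intro k
    have hFk0 : 0 ≤ a k * max 1 (lam k) * Real.exp (φ (lam k)) :=
      le_trans (ha k) (hak_le k)
    rcases le_or_gt (lam k) T with h | h
    · have h1 : lam k ^ b ≤ T ^ b := Real.rpow_le_rpow (hlam k) h hb.le
      have h2 : 0 ≤ Kb * (E / F) * (a k * max 1 (lam k) * Real.exp (φ (lam k))) := by
        positivity
      nlinarith [ha k, Real.rpow_nonneg (hlam k) b]
    · have hφle : φ T ≤ φ (lam k) :=
        hφmono.monotoneOn (Set.mem_Ici.mpr hT0) (Set.mem_Ici.mpr (hlam k)) h.le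
      have hexp : Real.exp (-(φ (lam k)) / 2) ≤ E / F := by
        have h1 : Real.exp (-(φ (lam k)) / 2) ≤ Real.exp (-(φ T) / 2) :=
          Real.exp_le_exp.2 (by linarith)
        have h2 : Real.exp (-(φ T) / 2) = E / F := by
          rw [hφT]
          have : -(2 * Real.log (F / E)) / 2 = -Real.log (F / E) := by ring
          rw [this, Real.exp_neg, Real.exp_log (div_pos hFpos hEpos), inv_div]
        linarith
      have e1 : lam k ^ b ≤ Kb * Real.exp (φ (lam k) / 2) := by
        have hp := Real.exp_pos (φ (lam k) / 2)
        have h3 : lam k ^ b * (Real.exp (φ (lam k) / 2))⁻¹ ≤ Kb := by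
          rw [← Real.exp_neg, ← neg_div]; exact hKb _ (hlam k)
        have h4 : lam k ^ b = lam k ^ b * (Real.exp (φ (lam k) / 2))⁻¹ *
            Real.exp (φ (lam k) / 2) := by field_simp
        rw [h4]
        exact mul_le_mul_of_nonneg_right h3 hp.le
      have e2 : Real.exp (φ (lam k) / 2) ≤ Real.exp (φ (lam k)) * (E / F) := by
        have h5 : Real.exp (φ (lam k) / 2) =
            Real.exp (φ (lam k)) * Real.exp (-(φ (lam k)) / 2) := by
          rw [← Real.exp_add]; ring_nf
        rw [h5]
        exact mul_le_mul_of_nonneg_left hexp (Real.exp_pos _).le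
      have e3 : lam k ^ b ≤ Kb * (Real.exp (φ (lam k)) * (E / F)) :=
        e1.trans (mul_le_mul_of_nonneg_left e2 hKb0)
      have e4 : a k * lam k ^ b ≤ a k * (Kb * (Real.exp (φ (lam k)) * (E / F))) :=
        mul_le_mul_of_nonneg_left e3 (ha k)
      have hak := ha k
      have e5 : a k * 1 * Real.exp (φ (lam k)) ≤
          a k * max 1 (lam k) * Real.exp (φ (lam k)) :=
        mul_le_mul_of_nonneg_right
          (mul_le_mul_of_nonneg_left (le_max_left 1 (lam k)) hak) (Real.exp_pos _).le
      have e6 : a k * (Kb * (Real.exp (φ (lam k)) * (E / F))) =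
          Kb * (E / F) * (a k * 1 * Real.exp (φ (lam k))) := by ring
      have e7 : Kb * (E / F) * (a k * 1 * Real.exp (φ (lam k))) ≤
          Kb * (E / F) * (a k * max 1 (lam k) * Real.exp (φ (lam k))) :=
        mul_le_mul_of_nonneg_left e5 (by positivity)
      have hTb : 0 ≤ T ^ b * a k := mul_nonneg (Real.rpow_nonneg hT0 b) hak
      linarith [e4, e6 ▸ e4]
  have hdom : Summable (fun k => T ^ b * a k +
      Kb * (E / F) * (a k * max 1 (lam k) * Real.exp (φ (lam k)))) :=
    (hsumE.mul_left _).add (hsumF.mul_left _)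
  have hLsum : Summable (fun k => a k * lam k ^ b) :=
    Summable.of_nonneg_of_le (fun k => mul_nonneg (ha k) (Real.rpow_nonneg (hlam k) b))
      key hdom
  calc ∑' k, a k * lam k ^ b
      ≤ ∑' k, (T ^ b * a k +
        Kb * (E / F) * (a k * max 1 (lam k) * Real.exp (φ (lam k)))) :=
        Summable.tsum_le_tsum key hLsum hdom
    _ = T ^ b * E + Kb * (E / F) * F := by
        rw [Summable.tsum_add (hsumE.mul_left _) (hsumF.mul_left _), tsum_mul_left, tsum_mul_left]
    _ = (Kb + T ^ b) * E := by field_simp; ring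
end

section
/- Let c₀, c₁, r₀ > 0 and let F : [0,∞) → ℝ be a C¹ function with F(t) ≥ c₁ for all t ≥ 0, satisfying F'(t) ≤ c₀ F(t) (1 + (1/r₀) log(F(t)/c₁)) for all t ≥ 0. Then F(t) ≤ F(0) · exp(exp(β₁ t)) for all t ≥ 0, where β₁ := c₀ + c₀/r₀ + (c₀/r₀) log(F(0)/c₁). -/
open Real

theorem stmt3 (c₀ c₁ r₀ : ℝ) (hc₀ : 0 < c₀) (hc₁ : 0 < c₁) (hr₀ : 0 < r₀)
    (F F' : ℝ → ℝ)
    (hderiv : ∀ t ≥ (0:ℝ), HasDerivAt F (F' t) t)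
    (hF'cont : ContinuousOn F' (Set.Ici 0))
    (hlower : ∀ t ≥ (0:ℝ), c₁ ≤ F t)
    (hineq : ∀ t ≥ (0:ℝ), F' t ≤ c₀ * F t * (1 + (1 / r₀) * Real.log (F t / c₁))) :
    ∀ t ≥ (0:ℝ),
      F t ≤ F 0 * Real.exp (Real.exp ((c₀ + c₀ / r₀ + (c₀ / r₀) * Real.log (F 0 / c₁)) * t)) := by
  intro t ht
  have hF0 : c₁ ≤ F 0 := hlower 0 le_rfl
  have hF0pos : 0 < F 0 := lt_of_lt_of_le hc₁ hF0
  set L := Real.log (F 0 / c₁) with hLdef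
  have hL : 0 ≤ L := Real.log_nonneg ((one_le_div hc₁).mpr hF0)
  set β : ℝ := c₀ + c₀ / r₀ + c₀ / r₀ * L with hβdef
  have hβpos : 0 < β := by
    have h1 : 0 < c₀ / r₀ := div_pos hc₀ hr₀
    have h2 : 0 ≤ c₀ / r₀ * L := mul_nonneg h1.le hL
    rw [hβdef]
    linarith
  set B : ℝ → ℝ := fun x => F 0 * Real.exp (Real.exp (β * x)) with hBdef
  set B' : ℝ → ℝ := fun x => F 0 * (Real.exp (Real.exp (β * x)) * (Real.exp (β * x) * β))
    with hB'def
  have hBderiv : ∀ x : ℝ, HasDerivAt B (B' x) x := by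
    intro x
    have h1 : HasDerivAt (fun x : ℝ => β * x) β x := by
      simpa using (hasDerivAt_id x).const_mul β
    have h2 : HasDerivAt (fun x : ℝ => Real.exp (β * x)) (Real.exp (β * x) * β) x :=
      (Real.hasDerivAt_exp (β * x)).comp x h1
    have h3 : HasDerivAt (fun x : ℝ => Real.exp (Real.exp (β * x)))
        (Real.exp (Real.exp (β * x)) * (Real.exp (β * x) * β)) x :=
      by have := (Real.hasDerivAt_exp (Real.exp (β * x))).comp (h₂ := Real.exp) x h2; exact this
    exact h3.const_mul (F 0)
  have key : ∀ ⦃x⦄, x ∈ Set.Icc 0 t → F x ≤ B x := by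
    apply image_le_of_deriv_right_lt_deriv_boundary
      (f' := F') (B' := B')
      (fun x hx => (hderiv x hx.1).continuousAt.continuousWithinAt)
      (fun x hx => (hderiv x hx.1).hasDerivWithinAt)
      ?_ hBderiv ?_
    · -- F 0 ≤ B 0
      have : B 0 = F 0 * Real.exp 1 := by simp [hBdef]
      rw [this]
      nlinarith [Real.exp_one_gt_d9]
    · intro x hx heq
      have hx0 : 0 ≤ x := hx.1
      have hFx : c₁ ≤ F x := hlower x hx0
      have hE1 : (1:ℝ) ≤ Real.exp (β * x) := by
        have : 0 ≤ β * x := mul_nonneg hβpos.le hx0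
        simpa using Real.exp_le_exp.mpr this
      -- x cannot be 0
      have hxpos : 0 < x := by
        rcases lt_or_eq_of_le hx0 with h | h
        · exact h
        · exfalso
          have : F 0 = F 0 * Real.exp 1 := by simpa [hBdef, ← h] using heq
          nlinarith [Real.exp_one_gt_d9]
      have hEgt : (1:ℝ) < Real.exp (β * x) := by
        have : 0 < β * x := mul_pos hβpos hxpos
        simpa using Real.exp_lt_exp.mpr this
      have hlog : Real.log (B x / c₁) = L + Real.exp (β * x) := by
        rw [hBdef]
        simp only
        have hre : F 0 * Real.exp (Real.exp (β * x)) / c₁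
            = F 0 / c₁ * Real.exp (Real.exp (β * x)) := by ring
        rw [hre, Real.log_mul (ne_of_gt (div_pos hF0pos hc₁))
          (Real.exp_ne_zero _), Real.log_exp]
      calc F' x ≤ c₀ * F x * (1 + 1 / r₀ * Real.log (F x / c₁)) := hineq x hx0
        _ = c₀ * B x * (1 + 1 / r₀ * (L + Real.exp (β * x))) := by rw [heq, hlog]
        _ < B x * (Real.exp (β * x) * β) := by
            have hBpos : 0 < B x := by
              have : 0 < Real.exp (Real.exp (β * x)) := Real.exp_pos _
              exact mul_pos hF0pos this
            have hcL : 0 < c₀ + c₀ / r₀ * L := by positivity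
            have hstep : c₀ * (1 + 1 / r₀ * (L + Real.exp (β * x)))
                < Real.exp (β * x) * β := by
              have h1 : c₀ + c₀ / r₀ * L < (c₀ + c₀ / r₀ * L) * Real.exp (β * x) := by
                nlinarith
              have h2 : c₀ / r₀ * Real.exp (β * x) ≤ c₀ / r₀ * Real.exp (β * x) := le_rfl
              have expand : c₀ * (1 + 1 / r₀ * (L + Real.exp (β * x)))
                  = c₀ + c₀ / r₀ * L + c₀ / r₀ * Real.exp (β * x) := by
                field_simp; ring
              rw [expand, hβdef]
              nlinarith
            calc c₀ * B x * (1 + 1 / r₀ * (L + Real.exp (β * x)))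
                = B x * (c₀ * (1 + 1 / r₀ * (L + Real.exp (β * x)))) := by ring
              _ < B x * (Real.exp (β * x) * β) := by
                  exact mul_lt_mul_of_pos_left hstep hBpos
        _ = B' x := by rw [hBdef, hB'def]; ring
  exact key ⟨ht, le_rfl⟩
end

section
/- Let c₀, c₁, c₂ > 0 and let F : [0,∞) → ℝ be a C¹ function with F(t) ≥ c₁ for all t ≥ 0, satisfying F'(t) ≤ c₀ F(t) {1 + c₂ log(F(t)/c₁) · log(2 + log(F(t)/c₁))} for all t ≥ 0. Then F(t) ≤ F(0) · exp(exp(exp(β₂ t))) for all t ≥ 0, where β₂ := c₀ + c₀ c₂ (1 + log(F(0)/c₁)) (1 + log(3 + log(F(0)/c₁))). -/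
open Real

theorem stmt4 (c₀ c₁ c₂ : ℝ) (hc₀ : 0 < c₀) (hc₁ : 0 < c₁) (hc₂ : 0 < c₂)
    (F F' : ℝ → ℝ)
    (hderiv : ∀ t ≥ (0:ℝ), HasDerivAt F (F' t) t)
    (hF'cont : ContinuousOn F' (Set.Ici 0))
    (hlower : ∀ t ≥ (0:ℝ), c₁ ≤ F t)
    (hineq : ∀ t ≥ (0:ℝ), F' t ≤
      c₀ * F t * (1 + c₂ * Real.log (F t / c₁) * Real.log (2 + Real.log (F t / c₁)))) :
    ∀ t ≥ (0:ℝ),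
      F t ≤ F 0 * Real.exp (Real.exp (Real.exp
        ((c₀ + c₀ * c₂ * (1 + Real.log (F 0 / c₁)) * (1 + Real.log (3 + Real.log (F 0 / c₁)))) * t))) := by
  intro t ht
  set L₀ := Real.log (F 0 / c₁) with hL₀def
  have hF0 : c₁ ≤ F 0 := hlower 0 le_rfl
  have hF0pos : 0 < F 0 := lt_of_lt_of_le hc₁ hF0
  have hL₀ : 0 ≤ L₀ := Real.log_nonneg (by rw [le_div_iff₀ hc₁]; linarith)
  have hlog3 : 0 ≤ Real.log (3 + L₀) := Real.log_nonneg (by linarith)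
  set β := c₀ + c₀ * c₂ * (1 + L₀) * (1 + Real.log (3 + L₀)) with hβdef
  have hβpos : 0 < β := by
    have h2 : 0 ≤ c₀ * c₂ * (1 + L₀) * (1 + Real.log (3 + L₀)) :=
      mul_nonneg (mul_nonneg (mul_nonneg hc₀.le hc₂.le) (by linarith)) (by linarith)
    linarith
  set B : ℝ → ℝ := fun x => F 0 * Real.exp (Real.exp (Real.exp (β * x))) with hBdef
  set B' : ℝ → ℝ := fun x =>
    F 0 * (Real.exp (Real.exp (Real.exp (β * x))) *
      (Real.exp (Real.exp (β * x)) * (Real.exp (β * x) * β))) with hB'def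
  have hBderiv : ∀ x : ℝ, HasDerivAt B (B' x) x := by
    intro x
    have h1 : HasDerivAt (fun x : ℝ => β * x) β x := by
      simpa using (hasDerivAt_id x).const_mul β
    have h2 := ((h1.exp.exp.exp).const_mul (F 0))
    exact h2
  have hfc : ContinuousOn F (Set.Icc 0 t) :=
    fun x hx => (hderiv x hx.1).continuousAt.continuousWithinAt
  have hfd : ∀ x ∈ Set.Ico (0:ℝ) t, HasDerivWithinAt F (F' x) (Set.Ici x) x :=
    fun x hx => (hderiv x hx.1).hasDerivWithinAt
  have ha : F 0 ≤ B 0 := by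
    have h1 : (1:ℝ) ≤ Real.exp (Real.exp (Real.exp (β * 0))) :=
      Real.one_le_exp (Real.exp_nonneg _)
    simpa [hBdef] using le_mul_of_one_le_right hF0pos.le h1
  have bound : ∀ x ∈ Set.Ico (0:ℝ) t, F x = B x → F' x < B' x := by
    intro x hx hFB
    have hx0 : (0:ℝ) ≤ x := hx.1
    set E := Real.exp (β * x) with hEdef
    set D := Real.exp E with hDdef
    have hE1 : 1 ≤ E := Real.one_le_exp (mul_nonneg hβpos.le hx0)
    have hD2 : 2 ≤ D := by
      have := Real.add_one_le_exp E
      linarith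
    have hP : 0 < F 0 * Real.exp D := mul_pos hF0pos (Real.exp_pos _)
    have hBx : B x = F 0 * Real.exp D := rfl
    have hlogeq : Real.log (F x / c₁) = L₀ + D := by
      rw [hFB, hBx]
      rw [show F 0 * Real.exp D / c₁ = F 0 / c₁ * Real.exp D by ring,
        Real.log_mul (ne_of_gt (div_pos hF0pos hc₁)) (by positivity),
        Real.log_exp, hL₀def]
    set M := L₀ + D with hMdef
    have hM0 : 0 ≤ M := by linarith
    have hlogM0 : 0 ≤ Real.log (2 + M) := Real.log_nonneg (by linarith)
    have hM1 : M ≤ (1 + L₀) * D := by nlinarith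
    have hM2 : Real.log (2 + M) ≤ (1 + Real.log (3 + L₀)) * E := by
      have harg : 2 + M ≤ (3 + L₀) * D := by nlinarith
      have h3 : Real.log (2 + M) ≤ Real.log ((3 + L₀) * D) :=
        Real.log_le_log (by linarith) harg
      have h4 : Real.log ((3 + L₀) * D) = Real.log (3 + L₀) + E := by
        rw [Real.log_mul (by linarith) (by positivity), hDdef, Real.log_exp]
      nlinarith
    have hprod : M * Real.log (2 + M) ≤ ((1 + L₀) * D) * ((1 + Real.log (3 + L₀)) * E) :=
      mul_le_mul hM1 hM2 hlogM0 (by positivity)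
    have hA : 1 < D * E := by nlinarith
    have hkey : c₀ * (1 + c₂ * M * Real.log (2 + M)) < β * (D * E) := by
      have h1 : c₀ * c₂ * (M * Real.log (2 + M)) ≤
          c₀ * c₂ * (((1 + L₀) * D) * ((1 + Real.log (3 + L₀)) * E)) :=
        mul_le_mul_of_nonneg_left hprod (by positivity)
      have h2 : c₀ * 1 < c₀ * (D * E) := mul_lt_mul_of_pos_left hA hc₀
      rw [hβdef]
      linarith
    have hFx := hineq x hx0
    rw [hlogeq] at hFx
    calc F' x ≤ c₀ * F x * (1 + c₂ * M * Real.log (2 + M)) := by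
          rw [hMdef]; exact hFx
      _ = (F 0 * Real.exp D) * (c₀ * (1 + c₂ * M * Real.log (2 + M))) := by
          rw [hFB, hBx]; ring
      _ < (F 0 * Real.exp D) * (β * (D * E)) :=
          mul_lt_mul_of_pos_left hkey hP
      _ = B' x := by
          show _ = F 0 * (Real.exp (Real.exp (Real.exp (β * x))) *
            (Real.exp (Real.exp (β * x)) * (Real.exp (β * x) * β)))
          rw [hDdef, hEdef]; ring
  have key := image_le_of_deriv_right_lt_deriv_boundary hfc hfd ha hBderiv bound
  exact key ⟨ht, le_rfl⟩
end

section
/- Let y : [0,T] → (0,∞) be differentiable with y'(t) ≤ a y(t) + b y(t) log y(t) for all t ∈ [0,T], where a ∈ ℝ and b > 0, and assume y(0) ≥ 1. Then y(t) ≤ exp((log y(0) + a/b) e^{bt} − a/b) for all t ∈ [0,T]. -/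
open Real

theorem stmt11 (T a b : ℝ) (hT : 0 < T) (hb : 0 < b)
    (y y' : ℝ → ℝ)
    (hypos : ∀ t ∈ Set.Icc 0 T, 0 < y t)
    (hderiv : ∀ t ∈ Set.Icc 0 T, HasDerivAt y (y' t) t)
    (hineq : ∀ t ∈ Set.Icc 0 T, y' t ≤ a * y t + b * y t * Real.log (y t))
    (hy0 : 1 ≤ y 0) :
    ∀ t ∈ Set.Icc 0 T,
      y t ≤ Real.exp ((Real.log (y 0) + a / b) * Real.exp (b * t) - a / b) := by
  set w : ℝ → ℝ := fun t => Real.log (y t) with hw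
  set w' : ℝ → ℝ := fun t => y' t / y t with hw'
  have hwderiv : ∀ t ∈ Set.Icc 0 T, HasDerivAt w (w' t) t := fun t ht =>
    (hderiv t ht).log (hypos t ht).ne'
  have key : ∀ t ∈ Set.Icc 0 T, w t ≤ gronwallBound (w 0) b a t := by
    have := le_gronwallBound_of_liminf_deriv_right_le (f := w) (f' := w')
      (δ := w 0) (K := b) (ε := a) (a := 0) (b := T)
      (fun t ht => (hwderiv t ht).continuousAt.continuousWithinAt)
      (fun x hx r hr => by
        have hx' : x ∈ Set.Icc 0 T := ⟨hx.1, hx.2.le⟩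
        exact ((hwderiv x hx').hasDerivWithinAt (s := Set.Ici x)).liminf_right_slope_le hr)
      le_rfl
      (fun x hx => by
        have hx' : x ∈ Set.Icc 0 T := ⟨hx.1, hx.2.le⟩
        have hy := hypos x hx'
        have h := hineq x hx'
        rw [hw', hw]
        rw [div_le_iff₀ hy]
        calc y' x ≤ a * y x + b * y x * Real.log (y x) := h
          _ = (b * Real.log (y x) + a) * y x := by ring)
    intro t ht
    simpa using this t (by simpa using ht)
  intro t ht
  have hwt := key t ht
  rw [gronwallBound_of_K_ne_0 hb.ne'] at hwt
  have : w t ≤ (Real.log (y 0) + a / b) * Real.exp (b * t) - a / b := by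
    calc w t ≤ w 0 * Real.exp (b * t) + a / b * (Real.exp (b * t) - 1) := hwt
      _ = (Real.log (y 0) + a / b) * Real.exp (b * t) - a / b := by rw [hw]; ring
  calc y t = Real.exp (w t) := (Real.exp_log (hypos t ht)).symm
    _ ≤ _ := Real.exp_le_exp.mpr this
end
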